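/- arXiv:2306.08786 — 4 statements merged into one kernel-verified Lean document; each statement's English description precedes it below -/
import Mathlib

section
/- Let T be a finite tree with n ≥ 2 vertices, let D be the set of vertices of T of degree 1 or 2, and let S be a maximal independent subset of D. Then |S| ≥ n/6; consequently the number of vertices not in S satisfies n − |S| ≤ (5/6)·n. -/
lemma aux_degree_pos {V : Type*} [Fintype V] [DecidableEq V]
    (G : SimpleGraph V) [DecidableRel G.Adj]
    (hc : G.Connected) (hn : 2 ≤ Fintype.card V) (v : V) : 1 ≤ G.degree v := by
  obtain ⟨w, hw⟩ := Fintype.exists_ne_of_one_lt_card (by omega) v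
  obtain ⟨p⟩ := hc v w
  have : ∃ u, G.Adj v u := by
    cases p with
    | nil => exact absurd rfl hw
    | cons h _ => exact ⟨_, h⟩
  exact (G.degree_pos_iff_exists_adj v).mpr this

/-- In a finite tree with `n ≥ 2` vertices, any maximal independent subset `S`
of the set `D` of vertices of degree 1 or 2 satisfies `|S| ≥ n/6`, and hence
`n - |S| ≤ (5/6)·n`. -/
theorem tree_mis_low_degree_card {V : Type*} [Fintype V] [DecidableEq V]
    (G : SimpleGraph V) [DecidableRel G.Adj]
    (hT : G.IsTree) (hn : 2 ≤ Fintype.card V)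
    (D S : Finset V)
    (hD : D = Finset.univ.filter (fun v => G.degree v = 1 ∨ G.degree v = 2))
    (hSD : S ⊆ D)
    (hInd : ∀ u ∈ S, ∀ v ∈ S, ¬ G.Adj u v)
    (hMax : ∀ v ∈ D \ S, ∃ u ∈ S, G.Adj v u) :
    (Fintype.card V : ℝ) / 6 ≤ S.card ∧
    (Fintype.card V : ℝ) - S.card ≤ 5 / 6 * Fintype.card V := by
  set n := Fintype.card V with hn'
  -- degree sum formula
  have hsum : ∑ v, G.degree v = 2 * G.edgeFinset.card :=
    G.sum_degrees_eq_twice_card_edges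
  have he : G.edgeFinset.card + 1 = n := hT.card_edgeFinset
  -- 2 * |D| ≥ n + 2
  have hDbig : n + 2 ≤ 2 * D.card := by
    have hsplit : ∑ v, G.degree v = ∑ v ∈ D, G.degree v + ∑ v ∈ Dᶜ, G.degree v :=
      (Finset.sum_add_sum_compl D _).symm
    have h1 : ∀ v ∈ D, 1 ≤ G.degree v := fun v _ =>
      aux_degree_pos G hT.isConnected hn v
    have h3 : ∀ v ∈ Dᶜ, 3 ≤ G.degree v := by
      intro v hv
      rw [Finset.mem_compl, hD, Finset.mem_filter] at hv
      simp only [Finset.mem_univ, true_and] at hv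
      push_neg at hv
      have := aux_degree_pos G hT.isConnected hn v
      omega
    have hb1 : D.card ≤ ∑ v ∈ D, G.degree v := by
      simpa using Finset.sum_le_sum h1
    have hb3 : 3 * Dᶜ.card ≤ ∑ v ∈ Dᶜ, G.degree v := by
      rw [mul_comm]
      simpa using Finset.sum_le_sum h3
    have hcc : Dᶜ.card = n - D.card := by
      rw [Finset.card_compl]
    have hle : D.card ≤ n := D.card_le_univ
    omega
  -- |D| ≤ 3 * |S|
  have hDS : D.card ≤ 3 * S.card := by
    have hsub : D \ S ⊆ S.biUnion (fun s => G.neighborFinset s) := by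
      intro v hv
      obtain ⟨u, hu, hadj⟩ := hMax v hv
      exact Finset.mem_biUnion.2 ⟨u, hu, by simpa using hadj.symm⟩
    have h1 : (D \ S).card ≤ ∑ s ∈ S, G.degree s := by
      calc (D \ S).card ≤ (S.biUnion (fun s => G.neighborFinset s)).card :=
            Finset.card_le_card hsub
        _ ≤ ∑ s ∈ S, (G.neighborFinset s).card := Finset.card_biUnion_le
        _ = ∑ s ∈ S, G.degree s := by simp [SimpleGraph.card_neighborFinset_eq_degree]
    have h2 : ∑ s ∈ S, G.degree s ≤ 2 * S.card := by
      rw [mul_comm]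
      have : ∀ s ∈ S, G.degree s ≤ 2 := by
        intro s hs
        have := hSD hs
        rw [hD, Finset.mem_filter] at this
        omega
      simpa using Finset.sum_le_sum this
    have h3 : (D \ S).card = D.card - S.card := Finset.card_sdiff_of_subset hSD
    have h4 : S.card ≤ D.card := Finset.card_le_card hSD
    omega
  have key : n ≤ 6 * S.card := by omega
  have keyR : (n : ℝ) ≤ 6 * S.card := by exact_mod_cast key
  constructor <;> [linarith; linarith]
end

section
/- Let F be a finite forest (a finite acyclic simple graph) with n vertices in which every connected component has at least 2 vertices, let D be the set of vertices of F of degree 1 or 2, and let S be a maximal independent subset of D. Then |S| ≥ n/6, and hence n − |S| ≤ (5/6)·n. -/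
/-!
A forest has at most as many edges as vertices, so its degrees sum to at most `2n`. Since every
degree is at least `1` and the vertices outside `D` have degree at least `3`, at least half of the
vertices lie in `D`. Every vertex of `D` is in `S` or adjacent to a vertex of `S`, and a vertex of
`S` has at most two neighbours, so `|D| ≤ 3|S|`. Together, `n ≤ 2|D| ≤ 6|S|`.
-/

open Finset

namespace SimpleGraph

variable {V : Type*} {G : SimpleGraph V}

lemma IsAcyclic.card_edgeFinset_le [Fintype V] [DecidableRel G.Adj] (hG : G.IsAcyclic) :
    #G.edgeFinset ≤ Fintype.card V := by
  classical
  cases isEmpty_or_nonempty V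
  · simp [eq_empty_of_isEmpty G.edgeFinset]
  obtain ⟨T, hGT, -, hT⟩ := (connected_top (V := V)).exists_isTree_le_of_le_of_isAcyclic le_top hG
  have hT_card := hT.card_edgeFinset
  have hsub : #G.edgeFinset ≤ #T.edgeFinset := card_le_card (edgeFinset_subset_edgeFinset.2 hGT)
  omega

lemma Reachable.one_le_degree_of_ne [Fintype V] [DecidableRel G.Adj] {v w : V}
    (h : G.Reachable v w) (hne : w ≠ v) : 1 ≤ G.degree v := by
  obtain ⟨p⟩ := h
  exact (G.degree_pos_iff_exists_adj v).2 ⟨_, p.adj_snd (Walk.not_nil_of_ne hne.symm)⟩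

lemma card_le_two_mul_card_filter_degree_one_or_two [Fintype V] [DecidableRel G.Adj]
    (hdeg : ∀ v, 1 ≤ G.degree v) (hE : #G.edgeFinset ≤ Fintype.card V) :
    Fintype.card V ≤ 2 * #{v | G.degree v = 1 ∨ G.degree v = 2} := by
  classical
  set D : Finset V := {v | G.degree v = 1 ∨ G.degree v = 2}
  have hD : #D * 1 ≤ ∑ v ∈ D, G.degree v := card_nsmul_le_sum D _ 1 fun v _ ↦ hdeg v
  have hDc : #Dᶜ * 3 ≤ ∑ v ∈ Dᶜ, G.degree v := by
    refine card_nsmul_le_sum Dᶜ _ 3 fun v hv ↦ ?_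
    simp only [D, mem_compl, mem_filter, mem_univ, true_and, not_or] at hv
    have := hdeg v
    omega
  have hsum : ∑ v ∈ D, G.degree v + ∑ v ∈ Dᶜ, G.degree v = 2 * #G.edgeFinset := by
    rw [sum_add_sum_compl, sum_degrees_eq_twice_card_edges]
  have hcompl : #Dᶜ = Fintype.card V - #D := card_compl D
  have hDle : #D ≤ Fintype.card V := card_le_univ D
  omega

lemma card_le_sum_degree_add_one_of_forall_adj [Fintype V] [DecidableEq V] [DecidableRel G.Adj]
    {D S : Finset V} (hdom : ∀ v ∈ D \ S, ∃ u ∈ S, G.Adj v u) :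
    #D ≤ ∑ u ∈ S, (G.degree u + 1) := by
  have hsub : D ⊆ S ∪ S.biUnion (G.neighborFinset ·) := by
    intro v hv
    by_cases hvS : v ∈ S
    · exact mem_union_left _ hvS
    · obtain ⟨u, huS, hvu⟩ := hdom v (mem_sdiff.2 ⟨hv, hvS⟩)
      exact mem_union_right _ (mem_biUnion.2 ⟨u, huS, (mem_neighborFinset _ _ _).2 hvu.symm⟩)
  calc #D ≤ #(S ∪ S.biUnion (G.neighborFinset ·)) := card_le_card hsub
    _ ≤ #S + #(S.biUnion (G.neighborFinset ·)) := card_union_le _ _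
    _ ≤ #S + ∑ u ∈ S, G.degree u := by
      gcongr
      exact card_biUnion_le.trans_eq (sum_congr rfl fun u _ ↦ card_neighborFinset_eq_degree G u)
    _ = ∑ u ∈ S, (G.degree u + 1) := by rw [sum_add_distrib, sum_const, smul_eq_mul, mul_one,
      add_comm]

end SimpleGraph

open SimpleGraph

theorem forest_mis_low_degree_card_general {V : Type*} [Fintype V] [DecidableEq V]
    (G : SimpleGraph V) [DecidableRel G.Adj]
    (hF : G.IsAcyclic)
    (hcomp : ∀ v : V, ∃ w : V, w ≠ v ∧ G.Reachable v w)
    (D S : Finset V)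
    (hD : D = Finset.univ.filter (fun v => G.degree v = 1 ∨ G.degree v = 2))
    (hSD : S ⊆ D)
    (hMax : ∀ v ∈ D \ S, ∃ u ∈ S, G.Adj v u) :
    (Fintype.card V : ℝ) / 6 ≤ S.card ∧
    (Fintype.card V : ℝ) - S.card ≤ 5 / 6 * Fintype.card V := by
  have hdeg : ∀ v, 1 ≤ G.degree v := fun v ↦ by
    obtain ⟨w, hwv, hvw⟩ := hcomp v
    exact hvw.one_le_degree_of_ne hwv
  have hnD : Fintype.card V ≤ 2 * #D :=
    hD ▸ card_le_two_mul_card_filter_degree_one_or_two hdeg hF.card_edgeFinset_le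
  have hDS : #D ≤ 3 * #S := calc
    #D ≤ ∑ u ∈ S, (G.degree u + 1) := card_le_sum_degree_add_one_of_forall_adj hMax
    _ ≤ ∑ _u ∈ S, 3 := sum_le_sum fun u hu ↦ by
      have := hSD hu
      simp only [hD, mem_filter, mem_univ, true_and] at this
      omega
    _ = 3 * #S := by rw [sum_const, smul_eq_mul, mul_comm]
  have hnS : (Fintype.card V : ℝ) ≤ 6 * #S := by exact_mod_cast (by omega : _ ≤ 6 * #S)
  constructor <;> linarith

/-- In a finite forest with `n` vertices in which every connected component has
at least 2 vertices, any maximal independent subset `S` of the set `D` of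
vertices of degree 1 or 2 satisfies `|S| ≥ n/6`, and hence `n - |S| ≤ (5/6)·n`. -/
theorem forest_mis_low_degree_card {V : Type*} [Fintype V] [DecidableEq V]
    (G : SimpleGraph V) [DecidableRel G.Adj]
    (hF : G.IsAcyclic)
    (hcomp : ∀ v : V, ∃ w : V, w ≠ v ∧ G.Reachable v w)
    (D S : Finset V)
    (hD : D = Finset.univ.filter (fun v => G.degree v = 1 ∨ G.degree v = 2))
    (hSD : S ⊆ D)
    (hInd : ∀ u ∈ S, ∀ v ∈ S, ¬ G.Adj u v)
    (hMax : ∀ v ∈ D \ S, ∃ u ∈ S, G.Adj v u) :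
    (Fintype.card V : ℝ) / 6 ≤ S.card ∧
    (Fintype.card V : ℝ) - S.card ≤ 5 / 6 * Fintype.card V :=
  forest_mis_low_degree_card_general G hF hcomp D S hD hSD hMax
end

section
/- Every finite tree with n ≥ 2 vertices contains an independent set S of vertices, each of degree 1 or 2, with |S| ≥ n/6. -/
open Finset

/-- Greedy independent set: if all vertices of `T` have degree ≤ 2, there is an
independent subset `S ⊆ T` with `|T| ≤ 3|S|`. -/
lemma greedy_indep {V : Type*} [Fintype V] [DecidableEq V] (G : SimpleGraph V)
    [DecidableRel G.Adj] (T : Finset V) (hd : ∀ v ∈ T, G.degree v ≤ 2) :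
    ∃ S ⊆ T, (∀ u ∈ S, ∀ v ∈ S, ¬ G.Adj u v) ∧ T.card ≤ 3 * S.card := by
  induction T using Finset.strongInduction with
  | _ T ih =>
    rcases T.eq_empty_or_nonempty with rfl | ⟨v, hv⟩
    · exact ⟨∅, by simp⟩
    · set A : Finset V := insert v (G.neighborFinset v) with hA
      have hsub : T \ A ⊂ T :=
        (Finset.ssubset_iff_of_subset Finset.sdiff_subset).mpr
          ⟨v, hv, by simp [hA]⟩
      obtain ⟨S, hST, hSind, hScard⟩ := ih (T \ A) hsub
        (fun w hw => hd w (Finset.mem_sdiff.mp hw).1)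
      have hvS : v ∉ S := fun h => by
        have := hST h; rw [Finset.mem_sdiff] at this
        exact this.2 (Finset.mem_insert_self _ _)
      refine ⟨insert v S, ?_, ?_, ?_⟩
      · intro w hw
        rcases Finset.mem_insert.mp hw with rfl | hw
        · exact hv
        · exact (Finset.mem_sdiff.mp (hST hw)).1
      · intro u hu w hw hadj
        rcases Finset.mem_insert.mp hu with h1 | h1 <;>
          rcases Finset.mem_insert.mp hw with h2 | h2
        · exact G.ne_of_adj hadj (h1.trans h2.symm)
        · exact (Finset.mem_sdiff.mp (hST h2)).2 (by
            rw [Finset.mem_insert, G.mem_neighborFinset]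
            right; rwa [h1] at hadj)
        · exact (Finset.mem_sdiff.mp (hST h1)).2 (by
            rw [Finset.mem_insert, G.mem_neighborFinset]
            right; rw [← h2]; exact hadj.symm)
        · exact hSind u h1 w h2 hadj
      · have hAcard : A.card ≤ 3 := by
          calc A.card ≤ (G.neighborFinset v).card + 1 := Finset.card_insert_le _ _
          _ ≤ 2 + 1 := by
              have := hd v hv
              rw [← G.card_neighborFinset_eq_degree] at this
              omega
          _ = 3 := rfl
        have h1 : T.card ≤ (T \ A).card + A.card := Finset.card_le_card_sdiff_add_card
        rw [Finset.card_insert_of_notMem hvS]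
        omega

/-- Every finite tree with `n ≥ 2` vertices contains an independent set `S` of
vertices, each of degree 1 or 2, with `|S| ≥ n/6`. -/
theorem tree_exists_large_low_degree_independent_set {V : Type*} [Fintype V]
    (G : SimpleGraph V) [DecidableRel G.Adj]
    (hT : G.IsTree) (hn : 2 ≤ Fintype.card V) :
    ∃ S : Finset V,
      (∀ v ∈ S, G.degree v = 1 ∨ G.degree v = 2) ∧
      (∀ u ∈ S, ∀ v ∈ S, ¬ G.Adj u v) ∧
      (Fintype.card V : ℝ) / 6 ≤ S.card := by
  classical
  -- Every vertex has positive degree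
  have hdeg1 : ∀ v : V, 1 ≤ G.degree v := by
    intro v
    rw [Nat.one_le_iff_ne_zero, Ne, ← Nat.le_zero, Nat.not_le, G.degree_pos_iff_exists_adj]
    obtain ⟨u, hu⟩ := Fintype.exists_ne_of_one_lt_card (by omega) v
    obtain ⟨p⟩ := hT.isConnected.preconnected v u
    cases p with
    | nil => exact absurd rfl hu.symm
    | cons h _ => exact ⟨_, h⟩
  set L : Finset V := Finset.univ.filter (fun v => G.degree v ≤ 2) with hL
  have hsum : ∑ v, G.degree v = 2 * (Fintype.card V - 1) := by
    rw [SimpleGraph.sum_degrees_eq_twice_card_edges]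
    have := hT.card_edgeFinset
    omega
  -- |Lᶜ| lower bounds
  have hcardL : Fintype.card V ≤ 2 * L.card := by
    have hsplit : ∑ v, G.degree v = ∑ v ∈ L, G.degree v + ∑ v ∈ Lᶜ, G.degree v :=
      (Finset.sum_add_sum_compl L _).symm
    have h1 : L.card ≤ ∑ v ∈ L, G.degree v :=
      Finset.card_nsmul_le_sum L _ 1 (fun v _ => hdeg1 v) |>.trans_eq' (by simp)
    have h2 : 3 * Lᶜ.card ≤ ∑ v ∈ Lᶜ, G.degree v := by
      refine le_trans ?_ (Finset.card_nsmul_le_sum Lᶜ _ 3 ?_)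
      · simp [mul_comm]
      · intro v hv
        simp only [hL, Finset.mem_compl, Finset.mem_filter, Finset.mem_univ, true_and,
          not_le] at hv
        omega
    have hcc : L.card + Lᶜ.card = Fintype.card V := by
      rw [Finset.card_add_card_compl]
    omega
  obtain ⟨S, hSL, hSind, hScard⟩ := greedy_indep G L
    (fun v hv => (Finset.mem_filter.mp hv).2)
  refine ⟨S, ?_, hSind, ?_⟩
  · intro v hv
    have h2 := (Finset.mem_filter.mp (hSL hv)).2
    have h1 := hdeg1 v
    omega
  · rw [div_le_iff₀ (by norm_num)]
    have : Fintype.card V ≤ 6 * S.card := by omega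
    calc (Fintype.card V : ℝ) ≤ (6 * S.card : ℕ) := by exact_mod_cast this
    _ = S.card * 6 := by push_cast; ring
end

section
/- Let T be a finite tree with n ≥ 2 vertices and let S be an independent set of vertices of T, each of degree 1 or 2 in T. Define the contracted graph T' on vertex set V(T) \ S by: a and b are adjacent in T' if and only if a and b are adjacent in T, or there exists v ∈ S of degree 2 whose set of neighbors in T is exactly {a, b}. Then T' is a tree with n − |S| vertices. -/
open SimpleGraph

section Aux

variable {V : Type*} [Fintype V] [DecidableEq V] (G : SimpleGraph V) [DecidableRel G.Adj]
    (S : Finset V) (H : SimpleGraph {x : V // x ∉ S})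
    (hH : ∀ a b : {x : V // x ∉ S},
      H.Adj a b ↔ (G.Adj a b ∨
        ∃ v ∈ S, G.degree v = 2 ∧ G.neighborSet v = {(a : V), (b : V)}))

include hH in
lemma exists_mid {a c : {x : V // x ∉ S}} (h : H.Adj a c) (hn : ¬ G.Adj (a : V) (c : V)) :
    ∃ v : V, v ∈ S ∧ G.Adj (a : V) v ∧ G.Adj v (c : V) ∧
      G.neighborSet v = {(a : V), (c : V)} := by
  obtain ⟨v, hvS, _, hns⟩ := ((hH a c).1 h).resolve_left hn
  refine ⟨v, hvS, ?_, ?_, hns⟩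
  · have : (a : V) ∈ G.neighborSet v := by rw [hns]; simp
    exact ((G.mem_neighborSet v (a : V)).1 this).symm
  · have : (c : V) ∈ G.neighborSet v := by rw [hns]; simp
    exact (G.mem_neighborSet v (c : V)).1 this

noncomputable def liftWalk : ∀ {a b : {x : V // x ∉ S}}, H.Walk a b → G.Walk (a : V) (b : V)
  | _, _, .nil => .nil
  | a, _, .cons (v := c) h p =>
    if hadj : G.Adj (a : V) (c : V) then .cons hadj (liftWalk p)
    else
      .cons (exists_mid G S H hH h hadj).choose_spec.2.1
        (.cons (exists_mid G S H hH h hadj).choose_spec.2.2.1 (liftWalk p))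

lemma walk_eq_of_support_eq {W : Type*} {G' : SimpleGraph W} {a b : W} :
    ∀ (p q : G'.Walk a b), p.support = q.support → p = q := by
  intro p
  induction p with
  | nil =>
    intro q h
    cases q with
    | nil => rfl
    | cons h' q' => simp [Walk.support_cons] at h
  | cons h' p' ih =>
    intro q hq
    cases q with
    | nil => simp [Walk.support_cons] at hq
    | cons h'' q' =>
      rw [Walk.support_cons, Walk.support_cons] at hq
      injection hq with _ htl
      have hcc := htl
      rw [p'.support_eq_cons, q'.support_eq_cons] at hcc
      injection hcc with hc _
      subst hc
      rw [ih q' htl]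


include hH in
lemma liftWalk_support : ∀ {a b : {x : V // x ∉ S}} (p : H.Walk a b) (x : V),
    x ∈ (liftWalk G S H hH p).support →
    (∃ y, y ∈ p.support ∧ (y : V) = x) ∨
    (x ∈ S ∧ ∃ c d : {x : V // x ∉ S}, s(c, d) ∈ p.edges ∧
      G.neighborSet x = {(c : V), (d : V)}) := by
  intro a b p
  induction p with
  | nil =>
    intro x hx
    rw [liftWalk] at hx
    simp only [Walk.support_nil, List.mem_singleton] at hx
    exact Or.inl ⟨_, by simp, hx.symm⟩
  | cons h p ih =>
    intro x hx
    rw [liftWalk] at hx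
    split_ifs at hx with hadj
    · rw [Walk.support_cons, List.mem_cons] at hx
      rcases hx with hx | hx
      · exact Or.inl ⟨_, by simp, hx.symm⟩
      · rcases ih x hx with ⟨y, hy, hyv⟩ | ⟨hxS, c', d', hed, hns⟩
        · exact Or.inl ⟨y, by simp [hy], hyv⟩
        · exact Or.inr ⟨hxS, c', d', by simp [hed], hns⟩
    · rw [Walk.support_cons, Walk.support_cons, List.mem_cons, List.mem_cons] at hx
      rcases hx with hx | hx | hx
      · exact Or.inl ⟨_, by simp, hx.symm⟩
      · subst hx
        obtain ⟨h1, _, _, h4⟩ := (exists_mid G S H hH h hadj).choose_spec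
        exact Or.inr ⟨h1, _, _, by simp, h4⟩
      · rcases ih x hx with ⟨y, hy, hyv⟩ | ⟨hxS, c', d', hed, hns⟩
        · exact Or.inl ⟨y, by simp [hy], hyv⟩
        · exact Or.inr ⟨hxS, c', d', by simp [hed], hns⟩


include hH in
lemma liftWalk_isPath : ∀ {a b : {x : V // x ∉ S}} (p : H.Walk a b), p.IsPath →
    (liftWalk G S H hH p).IsPath := by
  intro a b p
  induction p with
  | nil => intro _; rw [liftWalk]; exact Walk.IsPath.nil
  | cons h p ih =>
    rename_i u c w
    intro hp
    rw [Walk.cons_isPath_iff] at hp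
    have hnotmem : ∀ (u : {x : V // x ∉ S}), u ∉ p.support →
        (u : V) ∉ (liftWalk G S H hH p).support := by
      intro u hu hmem
      rcases liftWalk_support G S H hH p _ hmem with ⟨y, hy, hyv⟩ | ⟨hxS, _⟩
      · exact hu (Subtype.val_injective hyv ▸ hy)
      · exact u.2 hxS
    rw [liftWalk]
    split_ifs with hadj
    · exact Walk.IsPath.cons (ih hp.1) (hnotmem _ hp.2)
    · obtain ⟨hvS, hva, hvc, hns⟩ := (exists_mid G S H hH h hadj).choose_spec
      set v := (exists_mid G S H hH h hadj).choose with hvdef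
      refine Walk.IsPath.cons (Walk.IsPath.cons (ih hp.1) ?_) ?_
      · -- v ∉ (liftWalk p).support
        intro hmem
        rcases liftWalk_support G S H hH p _ hmem with ⟨y, hy, hyv⟩ | ⟨_, c', d', hed, hns'⟩
        · exact y.2 (hyv ▸ hvS)
        · have hpair : ({(c' : V), (d' : V)} : Set V) = {(u : V), (c : V)} := by
            rw [← hns', hns]
          rw [Set.pair_eq_pair_iff] at hpair
          rcases hpair with ⟨h1, h2⟩ | ⟨h1, h2⟩
          · rw [Subtype.val_injective h1, Subtype.val_injective h2] at hed
            exact hp.2 (p.fst_mem_support_of_mem_edges hed)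
          · rw [Sym2.eq_swap] at hed
            rw [Subtype.val_injective h2, Subtype.val_injective h1] at hed
            exact hp.2 (p.fst_mem_support_of_mem_edges hed)
      · rw [Walk.support_cons, List.mem_cons]
        push_neg
        exact ⟨fun e => u.2 (by rw [e]; exact hvS), hnotmem _ hp.2⟩

include hH in
lemma liftWalk_support_filter : ∀ {a b : {x : V // x ∉ S}} (p : H.Walk a b),
    (liftWalk G S H hH p).support.filter (fun x => x ∉ S) = p.support.map Subtype.val := by
  intro a b p
  induction p with
  | nil =>
    rename_i u
    rw [liftWalk]
    simp
    exact u.2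
  | cons h p ih =>
    rename_i u c w
    rw [liftWalk]
    split_ifs with hadj
    · rw [Walk.support_cons, Walk.support_cons, List.map_cons, List.filter_cons, ← ih]
      simp
      exact u.2
    · obtain ⟨hvS, _, _, _⟩ := (exists_mid G S H hH h hadj).choose_spec
      rw [Walk.support_cons, Walk.support_cons, Walk.support_cons, List.map_cons, ← ih]
      rw [List.filter_cons, List.filter_cons]
      simp [hvS]
      exact u.2

end Aux


/-- One round of tree contraction: given a finite tree `T` with `n ≥ 2`
vertices and an independent set `S` of vertices of degree 1 or 2, the
contracted graph `T'` on `V \ S` — where `a` and `b` are adjacent iff they are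
adjacent in `T`, or some `v ∈ S` of degree 2 has neighbor set exactly `{a, b}` —
is a tree with `n - |S|` vertices. -/
theorem contraction_round_isTree {V : Type*} [Fintype V] [DecidableEq V]
    (G : SimpleGraph V) [DecidableRel G.Adj]
    (hT : G.IsTree) (hn : 2 ≤ Fintype.card V)
    (S : Finset V)
    (hSdeg : ∀ v ∈ S, G.degree v = 1 ∨ G.degree v = 2)
    (hInd : ∀ u ∈ S, ∀ v ∈ S, ¬ G.Adj u v)
    (H : SimpleGraph {x : V // x ∉ S})
    (hH : ∀ a b : {x : V // x ∉ S},
      H.Adj a b ↔ (G.Adj a b ∨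
        ∃ v ∈ S, G.degree v = 2 ∧ G.neighborSet v = {(a : V), (b : V)})) :
    H.IsTree ∧ Fintype.card {x : V // x ∉ S} = Fintype.card V - S.card := by
  have hcard : Fintype.card {x : V // x ∉ S} = Fintype.card V - S.card := by
    have hfc : Finset.univ.filter (fun x => x ∉ S) = Sᶜ := by ext x; simp
    rw [Fintype.card_subtype, hfc, Finset.card_compl]
  have hacyc : H.IsAcyclic := by
    apply isAcyclic_of_path_unique
    intro a b p q
    have hp := liftWalk_isPath G S H hH p.1 p.2
    have hq := liftWalk_isPath G S H hH q.1 q.2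
    have heq := hT.IsAcyclic.path_unique ⟨_, hp⟩ ⟨_, hq⟩
    have h1 : liftWalk G S H hH p.1 = liftWalk G S H hH q.1 := congrArg Subtype.val heq
    have h2 := liftWalk_support_filter G S H hH p.1
    rw [h1, liftWalk_support_filter G S H hH q.1] at h2
    have h3 := (List.map_injective_iff.mpr Subtype.val_injective) h2
    exact Subtype.ext (walk_eq_of_support_eq p.1 q.1 h3.symm)
  have key : ∀ (n : ℕ) (u w : V) (p : G.Walk u w), p.length ≤ n → p.IsPath →
      ∀ (hu : u ∉ S) (hw : w ∉ S), H.Reachable ⟨u, hu⟩ ⟨w, hw⟩ := by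
    intro n
    induction n with
    | zero =>
      intro u w p hl hp hu hw
      cases p with
      | nil => exact Reachable.refl _
      | cons h p' => simp at hl
    | succ n ih =>
      intro u w p hl hp hu hw
      cases p with
      | nil => exact Reachable.refl _
      | cons h p' =>
        rename_i c
        by_cases hc : c ∈ S
        · cases p' with
          | nil => exact absurd hc hw
          | cons h2 p'' =>
            rename_i d
            rw [Walk.cons_isPath_iff] at hp
            have hus : u ∉ (Walk.cons h2 p'').support := hp.2
            have hd : d ∉ S := fun hdS => hInd c hc d hdS h2
            have hud : u ≠ d := by
              intro e; subst e
              exact hus (by rw [Walk.support_cons]; exact List.mem_cons_of_mem _ p''.start_mem_support)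
            have hsub : ({u, d} : Finset V) ⊆ G.neighborFinset c := by
              intro x hx
              rcases Finset.mem_insert.mp hx with rfl | hx
              · exact (G.mem_neighborFinset c x).2 h.symm
              · rw [Finset.mem_singleton] at hx; subst hx
                exact (G.mem_neighborFinset c x).2 h2
            have hcard2 : ({u, d} : Finset V).card = 2 := by
              rw [Finset.card_insert_of_notMem (by simp [hud]), Finset.card_singleton]
            have hle : 2 ≤ G.degree c := by
              have := Finset.card_le_card hsub
              rwa [hcard2, G.card_neighborFinset_eq_degree] at this
            have hdeg : G.degree c = 2 := by
              rcases hSdeg c hc with h1 | h1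
              · omega
              · exact h1
            have hnf : G.neighborFinset c = {u, d} :=
              (Finset.eq_of_subset_of_card_le hsub
                (by rw [hcard2, G.card_neighborFinset_eq_degree, hdeg])).symm
            have hns : G.neighborSet c = {u, d} := by
              ext x
              rw [SimpleGraph.mem_neighborSet, ← SimpleGraph.mem_neighborFinset, hnf]
              simp
            have hadj : H.Adj ⟨u, hu⟩ ⟨d, hd⟩ := (hH _ _).2 (Or.inr ⟨c, hc, hdeg, hns⟩)
            have hlen : p''.length ≤ n := by
              rw [Walk.length_cons, Walk.length_cons] at hl; omega
            exact hadj.reachable.trans (ih d w p'' hlen hp.1.of_cons hd hw)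
        · have hadj : H.Adj ⟨u, hu⟩ ⟨c, hc⟩ := (hH _ _).2 (Or.inl h)
          have hlen : p'.length ≤ n := by rw [Walk.length_cons] at hl; omega
          exact hadj.reachable.trans (ih c w p' hlen hp.of_cons hc hw)
  have hne : Nonempty {x : V // x ∉ S} := by
    by_contra hcon
    have hall : ∀ x : V, x ∈ S := by
      intro x; by_contra hx; exact hcon ⟨⟨x, hx⟩⟩
    have hV : Nonempty V := Fintype.card_pos_iff.mp (by omega)
    obtain ⟨v⟩ := hV
    have hdegpos : 0 < G.degree v := by rcases hSdeg v (hall v) with h | h <;> omega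
    obtain ⟨w, hw⟩ := (G.degree_pos_iff_exists_adj v).mp hdegpos
    exact hInd v (hall v) w (hall w) hw
  have hconn : H.Connected := by
    haveI := hne
    apply SimpleGraph.Connected.mk
    intro a b
    obtain ⟨w⟩ := hT.isConnected (a : V) (b : V)
    have := key w.toPath.1.length _ _ w.toPath.1 le_rfl w.toPath.2 a.2 b.2
    exact this
  exact ⟨⟨hconn, hacyc⟩, hcard⟩
end
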